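/- Let p > 2, q = p/(p-1), ε ∈ (0,1/2), δ = 2q(q-1)ε/85, p_ε = (p-2ε)/(1-ε), and let Q be the Nazarov–Treil Bellman function. Define the 4×4 matrices U_φ = O_φ ⊕ O_{-φ} (block diagonal with rotation matrices by angles φ and -φ) and R_φ(Q) = (1/2)(U_φᵀ H(Q) + H(Q) U_φ) where H(Q) is the Hessian of Q. Then for every φ with |φ| ≤ arccos(1 - 2/p_ε), every ξ = (ζ,η) with η ≠ 0 and |ζ|^p ≠ |η|^q, and every ω = (ω₁,ω₂) ∈ ℝ²×ℝ²: ⟨R_φ(Q)(ξ)ω, ω⟩ ≥ 2δ cos φ · |ω₁||ω₂|. -/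

import Mathlib

noncomputable section
open Real Matrix

def qexp (p : ℝ) : ℝ := p / (p - 1)

/-- The Nazarov–Treil Bellman function on `ℂ × ℂ ≅ ℝ² × ℝ²`. -/
def Q (p δ : ℝ) (ζ η : ℂ) : ℝ :=
  if ‖ζ‖ ^ p ≤ ‖η‖ ^ qexp p then
    ‖ζ‖ ^ p + ‖η‖ ^ qexp p +
      δ * (‖ζ‖ ^ (2 : ℝ) * ‖η‖ ^ (2 - qexp p))
  else
    ‖ζ‖ ^ p + ‖η‖ ^ qexp p +
      δ * ((2 / p) * ‖ζ‖ ^ p + (2 / qexp p - 1) * ‖η‖ ^ qexp p)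

/-- Coordinate directions in `ℂ ≅ ℝ²`. -/
def dir : Fin 2 → ℂ := ![1, Complex.I]

/-- Partial derivative of `Q` in the `i`-th coordinate of the `ζ` variable. -/
def dζ (p δ : ℝ) (i : Fin 2) (ζ η : ℂ) : ℝ :=
  deriv (fun t : ℝ => Q p δ (ζ + (t : ℂ) * dir i) η) 0

/-- Partial derivative of `Q` in the `i`-th coordinate of the `η` variable. -/
def dη (p δ : ℝ) (i : Fin 2) (ζ η : ℂ) : ℝ :=
  deriv (fun t : ℝ => Q p δ ζ (η + (t : ℂ) * dir i)) 0

/-- The `ζζ` block of the Hessian of `Q`: `(H₁)ᵢⱼ = ∂²_{ζᵢζⱼ} Q`. -/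
def H1 (p δ : ℝ) (ζ η : ℂ) : Matrix (Fin 2) (Fin 2) ℝ :=
  Matrix.of fun i j => deriv (fun s : ℝ => dζ p δ j (ζ + (s : ℂ) * dir i) η) 0

/-- The mixed `ζη` block of the Hessian of `Q`: `(H₂)ᵢⱼ = ∂²_{ζᵢηⱼ} Q`. -/
def H2 (p δ : ℝ) (ζ η : ℂ) : Matrix (Fin 2) (Fin 2) ℝ :=
  Matrix.of fun i j => deriv (fun s : ℝ => dη p δ j (ζ + (s : ℂ) * dir i) η) 0

/-- The `ηη` block of the Hessian of `Q`: `(H₃)ᵢⱼ = ∂²_{ηᵢηⱼ} Q`. -/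
def H3 (p δ : ℝ) (ζ η : ℂ) : Matrix (Fin 2) (Fin 2) ℝ :=
  Matrix.of fun i j => deriv (fun s : ℝ => dη p δ j ζ (η + (s : ℂ) * dir i)) 0

def I1 (p δ : ℝ) (ζ η : ℂ) : Matrix (Fin 2) (Fin 2) ℝ :=
  !![H1 p δ ζ η 0 1, (H1 p δ ζ η 1 1 - H1 p δ ζ η 0 0) / 2;
     (H1 p δ ζ η 1 1 - H1 p δ ζ η 0 0) / 2, -(H1 p δ ζ η 0 1)]

def I2 (p δ : ℝ) (ζ η : ℂ) : Matrix (Fin 2) (Fin 2) ℝ :=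
  (1 / 2 : ℝ) •
    !![H2 p δ ζ η 1 0 - H2 p δ ζ η 0 1, H2 p δ ζ η 0 0 + H2 p δ ζ η 1 1;
       -(H2 p δ ζ η 0 0) - H2 p δ ζ η 1 1, H2 p δ ζ η 1 0 - H2 p δ ζ η 0 1]

def I3 (p δ : ℝ) (ζ η : ℂ) : Matrix (Fin 2) (Fin 2) ℝ :=
  !![H3 p δ ζ η 0 1, (H3 p δ ζ η 1 1 - H3 p δ ζ η 0 0) / 2;
     (H3 p δ ζ η 1 1 - H3 p δ ζ η 0 0) / 2, -(H3 p δ ζ η 0 1)]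

def Omat (φ : ℝ) : Matrix (Fin 2) (Fin 2) ℝ :=
  !![Real.cos φ, -Real.sin φ; Real.sin φ, Real.cos φ]

/-- The full `4×4` Hessian of `Q`, in block form. -/
def HQ (p δ : ℝ) (ζ η : ℂ) : Matrix (Fin 2 ⊕ Fin 2) (Fin 2 ⊕ Fin 2) ℝ :=
  Matrix.fromBlocks (H1 p δ ζ η) (H2 p δ ζ η) (H2 p δ ζ η)ᵀ (H3 p δ ζ η)

def Umat (φ : ℝ) : Matrix (Fin 2 ⊕ Fin 2) (Fin 2 ⊕ Fin 2) ℝ :=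
  Matrix.fromBlocks (Omat φ) 0 0 (Omat (-φ))

/-- `R_φ(Q) = (U_φᵀ H(Q) + H(Q) U_φ)/2`. -/
def RQ (p δ φ : ℝ) (ζ η : ℂ) : Matrix (Fin 2 ⊕ Fin 2) (Fin 2 ⊕ Fin 2) ℝ :=
  (1 / 2 : ℝ) • ((Umat φ)ᵀ * HQ p δ ζ η + HQ p δ ζ η * Umat φ)

/-!
Off the curve `|ζ|^p = |η|^q`, `Q(ζ, η) = F(|ζ|², |η|²)`, so its Hessian `H` has blocks
`a₁ I + b₁ ζζᵀ`, `m ζηᵀ`, `a₃ I + b₃ ηηᵀ`, and `⟨R_φ(Q) ω, ω⟩ = ⟨H ω, U_φ ω⟩` as `H` is symmetric.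
A block `a I + b zzᵀ` with `a ≥ 0` and `b |z|² = k a` satisfies
`⟨(a I + b zzᵀ) w, O_φ w⟩ ≥ a ((k + 2) cos φ - |k|) |w|² / 2`; for `k = p - 2` and `k = q - 2`
the hypothesis `cos φ ≥ (p - 2) / (p - 2ε)` turns this into `ε a cos φ |w|²` and
`ε (q - 1) a cos φ |w|²`. This gives `α |ω₁|² + β |ω₂|²` from the diagonal blocks, and
`2 δ cos φ |ω₁| |ω₂|` follows from AM–GM once `(δ cos φ)² ≤ α β`.
Above the curve `m = 0`, and `|ζ|^(p-2) |η|^(q-2) ≥ 1` with `δ² ≤ p q (q - 1) ε²` gives this.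
Below the curve `|ζ| ≤ |η|^(q-1)`: the mixed block (by Cauchy–Schwarz) and the contribution of
`δ |ζ|² |η|^(2-q)` to the `ηη` block are then `O(δ cos φ)`, and the factor `1/85` in `δ` leaves
enough room in `αβ ≥ 81 (δ cos φ)²` to absorb them.
-/

namespace NazarovTreil

open Complex (normSq)
open Filter Topology

section Algebra

variable {c S : ℝ}

lemma rotation_quadratic_nonneg (hS : S ^ 2 = 1 - c ^ 2) (X Y : ℝ) :
    0 ≤ (1 - c) * X ^ 2 + (1 + c) * Y ^ 2 - 2 * S * X * Y := by
  nlinarith [sq_nonneg ((1 + c) * Y - S * X), sq_nonneg ((1 - c) * X - S * Y),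
    sq_nonneg (X - Y), sq_nonneg (X + Y)]

lemma two_mul_mul_le_of_sq_le_mul {α β γ x y : ℝ} (hα : 0 < α) (h : γ ^ 2 ≤ α * β) :
    2 * γ * x * y ≤ α * x ^ 2 + β * y ^ 2 := by
  have : 0 ≤ α * (α * x ^ 2 + β * y ^ 2 - 2 * γ * x * y) := by
    nlinarith [sq_nonneg (α * x - γ * y), sq_nonneg y]
  nlinarith

lemma le_cos_of_abs_le_arccos {a φ : ℝ} (ha₀ : -1 ≤ a) (ha₁ : a ≤ 1) (h : |φ| ≤ arccos a) :
    a ≤ cos φ := by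
  have := cos_le_cos_of_nonneg_of_le_pi (abs_nonneg φ) (arccos_le_pi a) h
  rwa [cos_arccos ha₀ ha₁, cos_abs] at this

end Algebra

section RotatedForm

def wedge (z w : Fin 2 → ℝ) : ℝ := z 0 * w 1 - z 1 * w 0

lemma dotProduct_sq_add_wedge_sq (z w : Fin 2 → ℝ) :
    (z ⬝ᵥ w) ^ 2 + wedge z w ^ 2 = (z ⬝ᵥ z) * (w ⬝ᵥ w) := by
  simp only [dotProduct, Fin.sum_univ_two, wedge]; ring

lemma dotProduct_self_nonneg (w : Fin 2 → ℝ) : 0 ≤ w ⬝ᵥ w := by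
  simpa using dotProduct_self_star_nonneg w

/-- `⟨H ω, U_φ ω⟩` for `ω = (ω₁, ω₂)` and the symmetric matrix `H` with blocks `a₁ I + b₁ z zᵀ`,
`m z eᵀ`, `a₃ I + b₃ e eᵀ`, where `c = cos φ`, `S = sin φ`. -/
def rotatedRadialForm (c S a₁ b₁ m a₃ b₃ : ℝ) (z e ω₁ ω₂ : Fin 2 → ℝ) : ℝ :=
  a₁ * c * (ω₁ ⬝ᵥ ω₁) + b₁ * (z ⬝ᵥ ω₁) * (c * (z ⬝ᵥ ω₁) - S * wedge z ω₁)
    + m * (2 * c * (z ⬝ᵥ ω₁) * (e ⬝ᵥ ω₂)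
      + S * ((z ⬝ᵥ ω₁) * wedge e ω₂ - (e ⬝ᵥ ω₂) * wedge z ω₁))
    + a₃ * c * (ω₂ ⬝ᵥ ω₂) + b₃ * (e ⬝ᵥ ω₂) * (c * (e ⬝ᵥ ω₂) + S * wedge e ω₂)

variable {c S : ℝ}

/-- The diagonal blocks of `rotatedRadialForm`: `⟨(a I + b z zᵀ) w, O_φ w⟩` with `b |z|² = k a`. -/
lemma radial_form_lower_bound {a b k : ℝ} {z : Fin 2 → ℝ} (hS : S ^ 2 = 1 - c ^ 2) (ha : 0 ≤ a)
    (hb : b * (z ⬝ᵥ z) = k * a) (w : Fin 2 → ℝ) :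
    a * ((k + 2) * c - |k|) / 2 * (w ⬝ᵥ w) ≤
      a * c * (w ⬝ᵥ w) + b * (z ⬝ᵥ w) * (c * (z ⬝ᵥ w) - S * wedge z w) := by
  have hAB := dotProduct_sq_add_wedge_sq z w
  have hN := dotProduct_self_nonneg z
  generalize z ⬝ᵥ w = A, wedge z w = B, w ⬝ᵥ w = W, z ⬝ᵥ z = N at *
  rcases hN.eq_or_lt with rfl | hN
  · have hA : A = 0 := by nlinarith [sq_nonneg A, sq_nonneg B]
    have hak : a * k = 0 := by linarith
    have hak' : a * |k| = 0 := by rw [← abs_of_nonneg ha, ← abs_mul, hak, abs_zero]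
    subst hA
    linear_combination (W * c / 2) * hak - (W / 2) * hak'
  rw [← sub_nonneg, ← mul_nonneg_iff_of_pos_left hN]
  rcases le_total 0 k with hk | hk
  · rw [abs_of_nonneg hk]
    have key := mul_nonneg (mul_nonneg ha hk) (rotation_quadratic_nonneg hS B A)
    linear_combination key / 2 - (A * (c * A - S * B)) * hb + (a * k * (1 - c) / 2) * hAB
  · rw [abs_of_nonpos hk]
    have key := mul_nonneg (mul_nonneg ha (neg_nonneg.mpr hk))
      (rotation_quadratic_nonneg (c := c) (S := -S) (by rw [neg_sq]; exact hS) A B)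
    linear_combination key / 2 - (A * (c * A - S * B)) * hb - (a * k * (1 + c) / 2) * hAB

/-- The off-diagonal blocks of `rotatedRadialForm`, for `m = 1`. -/
lemma cross_form_lower_bound (hS : S ^ 2 = 1 - c ^ 2) (hc : 0 ≤ c) (z e ω₁ ω₂ : Fin 2 → ℝ) :
    -((1 + c) * √((z ⬝ᵥ z) * (ω₁ ⬝ᵥ ω₁)) * √((e ⬝ᵥ e) * (ω₂ ⬝ᵥ ω₂))) ≤
      2 * c * (z ⬝ᵥ ω₁) * (e ⬝ᵥ ω₂) + S * ((z ⬝ᵥ ω₁) * wedge e ω₂ - (e ⬝ᵥ ω₂) * wedge z ω₁) := by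
  have hM₁ : √((z ⬝ᵥ z) * (ω₁ ⬝ᵥ ω₁)) ^ 2 = (z ⬝ᵥ ω₁) ^ 2 + wedge z ω₁ ^ 2 := by
    rw [Real.sq_sqrt (mul_nonneg (dotProduct_self_nonneg z) (dotProduct_self_nonneg ω₁)),
      dotProduct_sq_add_wedge_sq]
  have hM₂ : √((e ⬝ᵥ e) * (ω₂ ⬝ᵥ ω₂)) ^ 2 = (e ⬝ᵥ ω₂) ^ 2 + wedge e ω₂ ^ 2 := by
    rw [Real.sq_sqrt (mul_nonneg (dotProduct_self_nonneg e) (dotProduct_self_nonneg ω₂)),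
      dotProduct_sq_add_wedge_sq]
  have hM₁0 := Real.sqrt_nonneg ((z ⬝ᵥ z) * (ω₁ ⬝ᵥ ω₁))
  have hM₂0 := Real.sqrt_nonneg ((e ⬝ᵥ e) * (ω₂ ⬝ᵥ ω₂))
  generalize z ⬝ᵥ ω₁ = A₁, wedge z ω₁ = B₁, e ⬝ᵥ ω₂ = A₂, wedge e ω₂ = B₂,
    √((z ⬝ᵥ z) * (ω₁ ⬝ᵥ ω₁)) = M₁, √((e ⬝ᵥ e) * (ω₂ ⬝ᵥ ω₂)) = M₂ at *
  -- Cauchy–Schwarz for `(A₁, B₁)` against `(2c A₂ + S B₂, -S A₂)`, whose length is `≤ (1 + c) M₂`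
  have hv : (2 * c * A₂ + S * B₂) ^ 2 + (S * A₂) ^ 2 ≤ (1 + c) ^ 2 * M₂ ^ 2 := by
    nlinarith [mul_nonneg hc (rotation_quadratic_nonneg hS A₂ B₂)]
  have hcs : (2 * c * A₁ * A₂ + S * (A₁ * B₂ - A₂ * B₁)) ^ 2 ≤
      M₁ ^ 2 * ((2 * c * A₂ + S * B₂) ^ 2 + (S * A₂) ^ 2) := by
    nlinarith [sq_nonneg (A₁ * (S * A₂) + B₁ * (2 * c * A₂ + S * B₂))]
  refine (abs_le_of_sq_le_sq' ?_ (by positivity)).1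
  calc _ ≤ M₁ ^ 2 * ((1 + c) ^ 2 * M₂ ^ 2) := hcs.trans (by gcongr)
    _ = ((1 + c) * M₁ * M₂) ^ 2 := by ring

lemma le_rotatedRadialForm {a₁ b₁ m a₃ b₃ α β γ κ : ℝ} {z e ω₁ ω₂ : Fin 2 → ℝ} (hα : 0 < α)
    (hγ : γ ^ 2 ≤ α * β)
    (h₁ : α * (ω₁ ⬝ᵥ ω₁) ≤
      a₁ * c * (ω₁ ⬝ᵥ ω₁) + b₁ * (z ⬝ᵥ ω₁) * (c * (z ⬝ᵥ ω₁) - S * wedge z ω₁))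
    (h₃ : β * (ω₂ ⬝ᵥ ω₂) ≤
      a₃ * c * (ω₂ ⬝ᵥ ω₂) + b₃ * (e ⬝ᵥ ω₂) * (c * (e ⬝ᵥ ω₂) + S * wedge e ω₂))
    (hm : -(2 * κ * √(ω₁ ⬝ᵥ ω₁) * √(ω₂ ⬝ᵥ ω₂)) ≤
      m * (2 * c * (z ⬝ᵥ ω₁) * (e ⬝ᵥ ω₂) + S * ((z ⬝ᵥ ω₁) * wedge e ω₂ - (e ⬝ᵥ ω₂) * wedge z ω₁))) :
    2 * (γ - κ) * √(ω₁ ⬝ᵥ ω₁) * √(ω₂ ⬝ᵥ ω₂) ≤ rotatedRadialForm c S a₁ b₁ m a₃ b₃ z e ω₁ ω₂ := by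
  have amgm := two_mul_mul_le_of_sq_le_mul (x := √(ω₁ ⬝ᵥ ω₁)) (y := √(ω₂ ⬝ᵥ ω₂)) hα hγ
  rw [Real.sq_sqrt (dotProduct_self_nonneg _), Real.sq_sqrt (dotProduct_self_nonneg _)]
    at amgm
  unfold rotatedRadialForm
  linarith

end RotatedForm

/-- The constraints of the theorem on `p`, its conjugate `q`, `ε`, `δ`, and `c = cos φ`,
`S = sin φ`; `cos_ge` is `|φ| ≤ arccos (1 - 2 / p_ε)`. -/
structure Admissible (p q ε δ c S : ℝ) : Prop where
  two_lt : 2 < p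
  conj_eq : q = p / (p - 1)
  eps_pos : 0 < ε
  eps_lt : ε < 1 / 2
  delta_eq : δ = 2 * q * (q - 1) * ε / 85
  cos_ge : (p - 2) / (p - 2 * ε) ≤ c
  cos_le : c ≤ 1
  sin_sq : S ^ 2 = 1 - c ^ 2

namespace Admissible

variable {p q ε δ c S : ℝ} (h : Admissible p q ε δ c S)
include h

lemma one_lt_q : 1 < q := by
  rw [h.conj_eq, lt_div_iff₀ (by linarith [h.two_lt])]; linarith

lemma q_lt_two : q < 2 := by
  rw [h.conj_eq, div_lt_iff₀ (by linarith [h.two_lt])]; linarith [h.two_lt]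

lemma sub_one_mul_sub_one : (p - 1) * (q - 1) = 1 := by
  rw [h.conj_eq]; field_simp [(by linarith [h.two_lt] : p - 1 ≠ 0)]; ring

lemma two_mul_eps_mul_le : 2 * ε * c ≤ p * c - (p - 2) := by
  have := (div_le_iff₀ (by linarith [h.two_lt, h.eps_lt] : 0 < p - 2 * ε)).1 h.cos_ge
  linarith

lemma cos_pos : 0 < c :=
  (div_pos (by linarith [h.two_lt]) (by linarith [h.two_lt, h.eps_lt])).trans_le h.cos_ge

lemma delta_pos : 0 < δ := by
  rw [h.delta_eq]
  have := h.one_lt_q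
  have := h.eps_pos
  positivity

lemma two_mul_eps_mul_sub_one_mul_le : 2 * ε * (q - 1) * c ≤ q * c - (2 - q) := by
  have := mul_le_mul_of_nonneg_left h.two_mul_eps_mul_le (by linarith [h.one_lt_q] : 0 ≤ q - 1)
  linear_combination this + (c - 1) * h.sub_one_mul_sub_one

lemma two_sub_le : 2 - q ≤ q * c := by
  have := h.one_lt_q
  have := h.eps_pos
  have := h.cos_pos
  have : 0 ≤ 2 * ε * (q - 1) * c := by positivity
  linarith [h.two_mul_eps_mul_sub_one_mul_le]

lemma delta_sq_le : δ ^ 2 ≤ p * q * (q - 1) * ε ^ 2 := by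
  have := h.one_lt_q
  have := h.q_lt_two
  have := h.two_lt
  rw [h.delta_eq]
  have hqε : 0 ≤ q * (q - 1) * ε ^ 2 := by positivity
  nlinarith [mul_le_mul_of_nonneg_left (show 4 * (q * (q - 1)) ≤ 7225 * p by nlinarith) hqε]

variable {z w : Fin 2 → ℝ} {a b : ℝ}

lemma zeta_block_ge (ha : 0 ≤ a) (hb : b * (z ⬝ᵥ z) = (p - 2) * a) :
    a * (ε * c) * (w ⬝ᵥ w) ≤ a * c * (w ⬝ᵥ w) + b * (z ⬝ᵥ w) * (c * (z ⬝ᵥ w) - S * wedge z w) := by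
  refine le_trans ?_ (radial_form_lower_bound h.sin_sq ha hb w)
  rw [abs_of_nonneg (by linarith [h.two_lt])]
  have hk : ε * c ≤ ((p - 2 + 2) * c - (p - 2)) / 2 := by linarith [h.two_mul_eps_mul_le]
  nlinarith [mul_le_mul_of_nonneg_left hk (mul_nonneg ha (dotProduct_self_nonneg w))]

lemma eta_block_ge (ha : 0 ≤ a) (hb : b * (z ⬝ᵥ z) = (q - 2) * a) :
    a * (ε * (q - 1) * c) * (w ⬝ᵥ w) ≤
      a * c * (w ⬝ᵥ w) + b * (z ⬝ᵥ w) * (c * (z ⬝ᵥ w) + S * wedge z w) := by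
  refine le_trans ?_ ((radial_form_lower_bound (c := c) (S := -S)
    (by rw [neg_sq]; exact h.sin_sq) ha hb w).trans_eq (by ring))
  rw [abs_of_nonpos (by linarith [h.q_lt_two])]
  have hk : ε * (q - 1) * c ≤ ((q - 2 + 2) * c - -(q - 2)) / 2 := by
    linarith [h.two_mul_eps_mul_sub_one_mul_le]
  nlinarith [mul_le_mul_of_nonneg_left hk (mul_nonneg ha (dotProduct_self_nonneg w))]

/-- Below the curve, the `ηη` block is the sum of the Hessians of `|η|^q` and of
`δ |ζ|² |η|^(2-q)`; the second one is small because `u² x y = |ζ|² / |η|^(2(q-1)) ≤ 1`. -/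
lemma eta_block_ge_of_mul_le_one {x y T u : ℝ} (hy : z ⬝ᵥ z = y) (hy0 : 0 < y) (hx0 : 0 ≤ x)
    (hu : 0 < u) (hT : u * y * T = 1) (hxy : u ^ 2 * x * y ≤ 1) :
    81 / 2 * δ * c * T * (w ⬝ᵥ w) ≤
      (q * T + δ * (2 - q) * x * u) * c * (w ⬝ᵥ w)
        + (q * (q - 2) * (T / y) - δ * q * (2 - q) * x * (u / y)) * (z ⬝ᵥ w)
          * (c * (z ⬝ᵥ w) + S * wedge z w) := by
  have hq1 := h.one_lt_q
  have hq2 := h.q_lt_two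
  have hc := h.cos_pos
  have hδ := h.delta_pos
  have h2q : 0 ≤ 2 - q := by linarith
  have hW := dotProduct_self_nonneg w
  have hT0 : 0 < T := pos_of_mul_pos_right (hT ▸ one_pos) (by positivity)
  have block := h.eta_block_ge (w := w) (by positivity : 0 ≤ q * T) (b := q * (q - 2) * (T / y))
    (by rw [hy]; field_simp)
  have block' := radial_form_lower_bound (c := c) (S := -S) (k := -q) (w := w)
    (b := -(δ * q * (2 - q) * x * (u / y))) (by rw [neg_sq]; exact h.sin_sq)
    (by positivity : 0 ≤ δ * (2 - q) * x * u) (by rw [hy]; field_simp)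
  rw [abs_neg, abs_of_pos (by linarith)] at block'
  -- `(2 - q) s (q - (2 - q) c) ≤ 2 (2 - q) ≤ 2 q c ≤ 4 c` for `s = u² x y ≤ 1`
  have hs : u ^ 2 * x * y * (q - (2 - q) * c) ≤ 2 := by
    nlinarith [mul_le_mul_of_nonneg_left h.cos_le h2q,
      mul_nonneg (mul_nonneg (sq_nonneg u) hx0) hy0.le]
  have hsmall := mul_le_mul_of_nonneg_left (mul_le_mul_of_nonneg_left hs h2q)
    (by positivity : 0 ≤ δ * T / 2 * (w ⬝ᵥ w))
  rw [show δ * T / 2 * (w ⬝ᵥ w) * ((2 - q) * (u ^ 2 * x * y * (q - (2 - q) * c))) =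
      δ / 2 * (w ⬝ᵥ w) * (2 - q) * (q - (2 - q) * c) * (x * u) by
    linear_combination δ / 2 * (w ⬝ᵥ w) * (2 - q) * (q - (2 - q) * c) * u * x * hT] at hsmall
  have hδ85 : q * T * (ε * (q - 1) * c) * (w ⬝ᵥ w) = 85 / 2 * δ * c * T * (w ⬝ᵥ w) := by
    rw [h.delta_eq]; ring
  have h2q := mul_le_mul_of_nonneg_left h.two_sub_le (by positivity : 0 ≤ δ * T * (w ⬝ᵥ w))
  have hq2c := mul_le_mul_of_nonneg_left hq2.le (by positivity : 0 ≤ δ * T * (w ⬝ᵥ w) * c)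
  linarith

/-- `δ c + δ (2 - q)(1 + c) t` is the coupling of the two blocks below the curve, where
`t = |ζ| / |η|^(q-1) ≤ 1`. -/
lemma coupling_sq_le {t : ℝ} (ht0 : 0 ≤ t) (ht : t ≤ 1) :
    (δ * c + δ * (2 - q) * (1 + c) * t) ^ 2 ≤ 81 * (δ * c) ^ 2 := by
  have hq2 := h.q_lt_two
  have h2q : 0 ≤ 2 - q := by linarith
  have hc := h.cos_pos
  have hδ := h.delta_pos
  -- `(2 - q)(1 + c) t ≤ 2 (2 - q) ≤ 2 q c ≤ 4 c`
  have h4 : (2 - q) * (1 + c) * t ≤ 4 * c := by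
    have : (1 + c) * t ≤ 2 := by nlinarith [h.cos_le]
    nlinarith [h.two_sub_le, h.one_lt_q, h.cos_le]
  have h0 : 0 ≤ δ * c + δ * (2 - q) * (1 + c) * t := by positivity
  nlinarith [mul_le_mul_of_nonneg_left h4 hδ.le]

end Admissible

section RegionEstimates

variable {p q ε δ c S x y : ℝ} {z e ω₁ ω₂ : Fin 2 → ℝ}

/-- Above the curve, with `x = |ζ|²`, `y = |η|²`, `R = x^(p/2-1)`, `T = y^(q/2-1)`. -/
lemma rotatedRadialForm_ge_of_one_le_mul (h : Admissible p q ε δ c S) {R T : ℝ}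
    (hx : z ⬝ᵥ z = x) (hy : e ⬝ᵥ e = y) (hx0 : 0 < x) (hy0 : 0 < y) (hR : 0 < R) (hT : 0 < T)
    (hRT : 1 ≤ R * T) :
    2 * δ * c * √(ω₁ ⬝ᵥ ω₁) * √(ω₂ ⬝ᵥ ω₂) ≤
      rotatedRadialForm c S ((1 + 2 * δ / p) * (p * R)) ((1 + 2 * δ / p) * (p * (p - 2) * (R / x)))
        0 ((1 + δ * (2 / q - 1)) * (q * T)) ((1 + δ * (2 / q - 1)) * (q * (q - 2) * (T / y)))
        z e ω₁ ω₂ := by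
  have hp := h.two_lt
  have hq1 := h.one_lt_q
  have hq2 := h.q_lt_two
  have hc := h.cos_pos
  have hε := h.eps_pos
  have hδ := h.delta_pos
  have hκ₁ : 1 ≤ 1 + 2 * δ / p := le_add_of_nonneg_right (by positivity)
  have hκ₃ : 1 ≤ 1 + δ * (2 / q - 1) := by
    refine le_add_of_nonneg_right (mul_nonneg hδ.le ?_)
    rw [sub_nonneg, le_div_iff₀ (by linarith)]; linarith
  have h₁ : p * R * (ε * c) * (ω₁ ⬝ᵥ ω₁) ≤ (1 + 2 * δ / p) * (p * R) * (ε * c) * (ω₁ ⬝ᵥ ω₁) :=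
    mul_le_mul_of_nonneg_right (mul_le_mul_of_nonneg_right
      (le_mul_of_one_le_left (by positivity) hκ₁) (by positivity)) (dotProduct_self_nonneg ω₁)
  have h₃ : q * T * (ε * (q - 1) * c) * (ω₂ ⬝ᵥ ω₂) ≤
      (1 + δ * (2 / q - 1)) * (q * T) * (ε * (q - 1) * c) * (ω₂ ⬝ᵥ ω₂) :=
    mul_le_mul_of_nonneg_right (mul_le_mul_of_nonneg_right
      (le_mul_of_one_le_left (by positivity) hκ₃) (by positivity)) (dotProduct_self_nonneg ω₂)
  have hγ : (δ * c) ^ 2 ≤ (p * R * (ε * c)) * (q * T * (ε * (q - 1) * c)) := by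
    calc (δ * c) ^ 2 ≤ p * q * (q - 1) * ε ^ 2 * c ^ 2 := by
          rw [mul_pow]; gcongr; exact h.delta_sq_le
      _ ≤ p * q * (q - 1) * ε ^ 2 * c ^ 2 * (R * T) := le_mul_of_one_le_right (by positivity) hRT
      _ = _ := by ring
  refine (show _ = 2 * (δ * c - 0) * _ * _ by ring).trans_le
    (le_rotatedRadialForm (by positivity) hγ
      (h₁.trans (h.zeta_block_ge (by positivity) (by rw [hx]; field_simp)))
      (h₃.trans (h.eta_block_ge (by positivity) (by rw [hy]; field_simp))) (by simp))

/-- Below the curve, with `x = |ζ|²`, `y = |η|²`, `R = x^(p/2-1)`, `R' = x^(p/2-2)`,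
`T = y^(q/2-1)`, `u = y^(-q/2)`. -/
lemma rotatedRadialForm_ge_of_mul_le_one (h : Admissible p q ε δ c S) {R R' T u : ℝ}
    (hx : z ⬝ᵥ z = x) (hy : e ⬝ᵥ e = y) (hy0 : 0 < y) (hR : 0 ≤ R) (hR' : R' * x = R)
    (hu : 0 < u) (hT : u * y * T = 1) (hxy : u ^ 2 * x * y ≤ 1) :
    2 * δ * c * √(ω₁ ⬝ᵥ ω₁) * √(ω₂ ⬝ᵥ ω₂) ≤
      rotatedRadialForm c S (p * R + 2 * δ * (u * y)) (p * (p - 2) * R') (2 * δ * (2 - q) * u)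
        (q * T + δ * (2 - q) * x * u) (q * (q - 2) * (T / y) - δ * q * (2 - q) * x * (u / y))
        z e ω₁ ω₂ := by
  have hp := h.two_lt
  have hq1 := h.one_lt_q
  have hq2 := h.q_lt_two
  have hc := h.cos_pos
  have hε := h.eps_pos
  have hδ := h.delta_pos
  have h2q : 0 ≤ 2 - q := by linarith
  have hx0 : 0 ≤ x := hx ▸ dotProduct_self_nonneg z
  have hW₁ := dotProduct_self_nonneg ω₁
  set t := u * √x * √y with ht_def
  have ht2 : t ^ 2 = u ^ 2 * x * y := by
    rw [ht_def, mul_pow, mul_pow, Real.sq_sqrt hx0, Real.sq_sqrt hy0.le]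
  have block₁ := h.zeta_block_ge (w := ω₁) (by positivity : 0 ≤ p * R)
    (b := p * (p - 2) * R') (by rw [hx, mul_assoc, hR']; ring)
  have hcross := mul_le_mul_of_nonneg_left (cross_form_lower_bound h.sin_sq hc.le z e ω₁ ω₂)
    (by positivity : 0 ≤ 2 * δ * (2 - q) * u)
  rw [hx, hy, Real.sqrt_mul hx0, Real.sqrt_mul hy0.le] at hcross
  have hγ : (δ * c + δ * (2 - q) * (1 + c) * t) ^ 2 ≤
      (2 * δ * c * (u * y)) * (81 / 2 * δ * c * T) := by
    calc _ ≤ 81 * (δ * c) ^ 2 :=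
          h.coupling_sq_le (by positivity) ((sq_le_one_iff₀ (by positivity)).1 (ht2 ▸ hxy))
      _ = _ := by linear_combination (-81 * (δ * c) ^ 2) * hT
  refine (show _ = 2 * ((δ * c + δ * (2 - q) * (1 + c) * t) - δ * (2 - q) * (1 + c) * t) * _ * _
    by ring).trans_le (le_rotatedRadialForm (by positivity) hγ ?_
      (h.eta_block_ge_of_mul_le_one hy hy0 hx0 hu hT hxy) (by rw [ht_def]; linarith))
  have : 0 ≤ p * R * (ε * c) * (ω₁ ⬝ᵥ ω₁) := by positivity
  linarith

end RegionEstimates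

section LineDerivatives

/-- Coordinates of `z ∈ ℂ ≅ ℝ²` in the basis `dir`. -/
def reIm (z : ℂ) : Fin 2 → ℝ := ![z.re, z.im]

lemma reIm_add_ofReal_mul_dir (z : ℂ) (s : ℝ) (i j : Fin 2) :
    reIm (z + s * dir i) j = reIm z j + s * (1 : Matrix (Fin 2) (Fin 2) ℝ) i j := by
  fin_cases i <;> fin_cases j <;> simp [reIm, dir]

lemma normSq_add_ofReal_mul_dir (z : ℂ) (s : ℝ) (i : Fin 2) :
    normSq (z + s * dir i) = normSq z + 2 * reIm z i * s + s ^ 2 := by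
  fin_cases i <;>
  · simp only [reIm, dir, Complex.normSq_apply, Complex.add_re, Complex.add_im, Complex.mul_re,
      Complex.mul_im, Complex.ofReal_re, Complex.ofReal_im, Complex.I_re, Complex.I_im,
      Complex.one_re, Complex.one_im,
      Fin.isValue, Fin.zero_eta, Fin.mk_one, cons_val_zero, cons_val_one, cons_val_fin_one]
    ring

@[simp] lemma reIm_zero : reIm 0 = 0 := by
  ext i; fin_cases i <;> rfl

lemma reIm_dotProduct_self (z : ℂ) : reIm z ⬝ᵥ reIm z = normSq z := by
  simp [reIm, dotProduct, Fin.sum_univ_two, Complex.normSq_apply]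

lemma hasDerivAt_normSq_add_ofReal_mul_dir (z : ℂ) (i : Fin 2) :
    HasDerivAt (fun s : ℝ => normSq (z + s * dir i)) (2 * reIm z i) 0 := by
  simp_rw [normSq_add_ofReal_mul_dir]
  simpa using (((hasDerivAt_id (0 : ℝ)).const_mul (2 * reIm z i)).const_add (normSq z)).fun_add
    (hasDerivAt_pow 2 (0 : ℝ))

variable {G : ℝ → ℝ} {G' : ℝ} {z : ℂ}

lemma hasDerivAt_comp_normSq_add_ofReal_mul_dir (hG : HasDerivAt G G' (normSq z)) (i : Fin 2) :
    HasDerivAt (fun s : ℝ => G (normSq (z + s * dir i))) (2 * G' * reIm z i) 0 := by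
  have hG' : HasDerivAt G G' (normSq (z + ((0 : ℝ) : ℂ) * dir i)) := by simpa using hG
  exact (hG'.comp (0 : ℝ) (hasDerivAt_normSq_add_ofReal_mul_dir z i)).congr_deriv (by ring)

lemma hasDerivAt_comp_normSq_mul_reIm (hG : HasDerivAt G G' (normSq z)) (i j : Fin 2) :
    HasDerivAt (fun s : ℝ => G (normSq (z + s * dir i)) * reIm (z + s * dir i) j)
      (G (normSq z) * (1 : Matrix (Fin 2) (Fin 2) ℝ) i j + 2 * G' * reIm z i * reIm z j) 0 := by
  simp_rw [reIm_add_ofReal_mul_dir]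
  have hline : HasDerivAt (fun s : ℝ => reIm z j + s * (1 : Matrix (Fin 2) (Fin 2) ℝ) i j)
      ((1 : Matrix (Fin 2) (Fin 2) ℝ) i j) 0 := by
    simpa using ((hasDerivAt_id (0 : ℝ)).mul_const _).const_add (reIm z j)
  exact ((hasDerivAt_comp_normSq_add_ofReal_mul_dir hG i).fun_mul hline).congr_deriv
    (by simp only [zero_mul, add_zero, Complex.ofReal_zero]; ring)

/-- At the origin `G ∘ |·|²` need not be differentiable (e.g. `G = (·) ^ a` with `0 < a < 1`),
but its product with a coordinate still is. -/
lemma hasDerivAt_comp_normSq_mul_reIm_zero (hG : ContinuousAt G 0) (i j : Fin 2) :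
    HasDerivAt (fun s : ℝ => G (normSq (0 + s * dir i)) * reIm (0 + s * dir i) j)
      (G 0 * (1 : Matrix (Fin 2) (Fin 2) ℝ) i j) 0 := by
  rw [hasDerivAt_iff_tendsto_slope_zero]
  have hsq : Tendsto (fun t : ℝ => t ^ 2) (𝓝[≠] 0) (𝓝 0) := by
    simpa using ((continuous_pow 2).tendsto (0 : ℝ)).mono_left nhdsWithin_le_nhds
  refine ((hG.tendsto.comp hsq).mul_const _).congr' ?_
  filter_upwards [self_mem_nhdsWithin] with t ht
  simp only [Function.comp_apply, normSq_add_ofReal_mul_dir, reIm_add_ofReal_mul_dir]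
  simp only [reIm_zero, Pi.zero_apply, Complex.normSq_zero, mul_zero, zero_mul, zero_add,
    sub_zero, smul_eq_mul]
  rw [← mul_assoc, mul_comm t⁻¹, mul_assoc, inv_mul_cancel_left₀ (ht : t ≠ 0)]

end LineDerivatives

section RadialHessian

/-- On `U`, `Q p δ (ζ, η) = F (|ζ|², |η|²)`, where `F` has partial derivatives `Fx` and `Fy`. -/
structure IsRadialOn (p δ : ℝ) (F Fx Fy : ℝ → ℝ → ℝ) (U : Set (ℂ × ℂ)) : Prop where
  isOpen : IsOpen U
  eq : ∀ w ∈ U, Q p δ w.1 w.2 = F (normSq w.1) (normSq w.2)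
  hasDerivAt_fst : ∀ w ∈ U,
    HasDerivAt (F · (normSq w.2)) (Fx (normSq w.1) (normSq w.2)) (normSq w.1)
  hasDerivAt_snd : ∀ w ∈ U,
    HasDerivAt (F (normSq w.1) ·) (Fy (normSq w.1) (normSq w.2)) (normSq w.2)

lemma eventually_add_ofReal_mul_dir_fst_mem {U : Set (ℂ × ℂ)} (hU : IsOpen U) {ζ η : ℂ}
    (hw : (ζ, η) ∈ U) (i : Fin 2) : ∀ᶠ s : ℝ in 𝓝 0, (ζ + s * dir i, η) ∈ U := by
  have hc : Continuous fun s : ℝ => (ζ + s * dir i, η) := by fun_prop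
  exact hc.continuousAt.preimage_mem_nhds (hU.mem_nhds (by simpa using hw))

lemma eventually_add_ofReal_mul_dir_snd_mem {U : Set (ℂ × ℂ)} (hU : IsOpen U) {ζ η : ℂ}
    (hw : (ζ, η) ∈ U) (i : Fin 2) : ∀ᶠ s : ℝ in 𝓝 0, (ζ, η + s * dir i) ∈ U := by
  have hc : Continuous fun s : ℝ => (ζ, η + s * dir i) := by fun_prop
  exact hc.continuousAt.preimage_mem_nhds (hU.mem_nhds (by simpa using hw))

namespace IsRadialOn

variable {p δ : ℝ} {F Fx Fy : ℝ → ℝ → ℝ} {U : Set (ℂ × ℂ)} (h : IsRadialOn p δ F Fx Fy U)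
  {ζ η : ℂ}
include h

lemma dζ_eq (hw : (ζ, η) ∈ U) (j : Fin 2) :
    dζ p δ j ζ η = 2 * Fx (normSq ζ) (normSq η) * reIm ζ j := by
  have hQ : (fun s : ℝ => Q p δ (ζ + s * dir j) η) =ᶠ[𝓝 0]
      fun s => F (normSq (ζ + s * dir j)) (normSq η) := by
    filter_upwards [eventually_add_ofReal_mul_dir_fst_mem h.isOpen hw j] with s hs
    exact h.eq _ hs
  exact ((hasDerivAt_comp_normSq_add_ofReal_mul_dir (h.hasDerivAt_fst _ hw) j).congr_of_eventuallyEq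
    hQ).deriv

lemma dη_eq (hw : (ζ, η) ∈ U) (j : Fin 2) :
    dη p δ j ζ η = 2 * Fy (normSq ζ) (normSq η) * reIm η j := by
  have hQ : (fun s : ℝ => Q p δ ζ (η + s * dir j)) =ᶠ[𝓝 0]
      fun s => F (normSq ζ) (normSq (η + s * dir j)) := by
    filter_upwards [eventually_add_ofReal_mul_dir_snd_mem h.isOpen hw j] with s hs
    exact h.eq _ hs
  exact ((hasDerivAt_comp_normSq_add_ofReal_mul_dir (h.hasDerivAt_snd _ hw) j).congr_of_eventuallyEq
    hQ).deriv

lemma H1_apply (hw : (ζ, η) ∈ U) {Fxx : ℝ}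
    (hFxx : HasDerivAt (Fx · (normSq η)) Fxx (normSq ζ) ∨
      ζ = 0 ∧ ContinuousAt (Fx · (normSq η)) 0) (i j : Fin 2) :
    H1 p δ ζ η i j = 2 * Fx (normSq ζ) (normSq η) * (1 : Matrix (Fin 2) (Fin 2) ℝ) i j
      + 4 * Fxx * reIm ζ i * reIm ζ j := by
  have hd : (fun s : ℝ => dζ p δ j (ζ + s * dir i) η) =ᶠ[𝓝 0]
      fun s => 2 * Fx (normSq (ζ + s * dir i)) (normSq η) * reIm (ζ + s * dir i) j := by
    filter_upwards [eventually_add_ofReal_mul_dir_fst_mem h.isOpen hw i] with s hs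
    exact h.dζ_eq hs j
  rw [H1, Matrix.of_apply]
  rcases hFxx with hFxx | ⟨rfl, hFx⟩
  · rw [((hasDerivAt_comp_normSq_mul_reIm (hFxx.const_mul 2) i j).congr_of_eventuallyEq
      hd).deriv]
    ring
  · rw [((hasDerivAt_comp_normSq_mul_reIm_zero (hFx.const_mul 2) i j).congr_of_eventuallyEq
      hd).deriv]
    simp

lemma H2_apply (hw : (ζ, η) ∈ U) {Fyx : ℝ} (hFyx : HasDerivAt (Fy · (normSq η)) Fyx (normSq ζ))
    (i j : Fin 2) : H2 p δ ζ η i j = 4 * Fyx * reIm ζ i * reIm η j := by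
  have hd : (fun s : ℝ => dη p δ j (ζ + s * dir i) η) =ᶠ[𝓝 0]
      fun s => 2 * Fy (normSq (ζ + s * dir i)) (normSq η) * reIm η j := by
    filter_upwards [eventually_add_ofReal_mul_dir_fst_mem h.isOpen hw i] with s hs
    exact h.dη_eq hs j
  rw [H2, Matrix.of_apply, ((hasDerivAt_comp_normSq_add_ofReal_mul_dir
    ((hFyx.const_mul 2).mul_const (reIm η j)) i).congr_of_eventuallyEq hd).deriv]
  ring

lemma H3_apply (hw : (ζ, η) ∈ U) {Fyy : ℝ} (hFyy : HasDerivAt (Fy (normSq ζ) ·) Fyy (normSq η))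
    (i j : Fin 2) :
    H3 p δ ζ η i j = 2 * Fy (normSq ζ) (normSq η) * (1 : Matrix (Fin 2) (Fin 2) ℝ) i j
      + 4 * Fyy * reIm η i * reIm η j := by
  have hd : (fun s : ℝ => dη p δ j ζ (η + s * dir i)) =ᶠ[𝓝 0]
      fun s => 2 * Fy (normSq ζ) (normSq (η + s * dir i)) * reIm (η + s * dir i) j := by
    filter_upwards [eventually_add_ofReal_mul_dir_snd_mem h.isOpen hw i] with s hs
    exact h.dη_eq hs j
  rw [H3, Matrix.of_apply,
    ((hasDerivAt_comp_normSq_mul_reIm (hFyy.const_mul 2) i j).congr_of_eventuallyEq hd).deriv]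
  ring

end IsRadialOn

end RadialHessian

section RadialBlocks

/-- The Hessian of `(ζ, η) ↦ F (|ζ|², |η|²)`, in block form, at `(z, e) ∈ ℝ² × ℝ²`. -/
def radialBlocks (a₁ b₁ m a₃ b₃ : ℝ) (z e : Fin 2 → ℝ) :
    Matrix (Fin 2 ⊕ Fin 2) (Fin 2 ⊕ Fin 2) ℝ :=
  fromBlocks (a₁ • 1 + b₁ • vecMulVec z z) (m • vecMulVec z e) (m • vecMulVec e z)
    (a₃ • 1 + b₃ • vecMulVec e e)

lemma IsRadialOn.HQ_eq {p δ : ℝ} {F Fx Fy : ℝ → ℝ → ℝ} {U : Set (ℂ × ℂ)}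
    (h : IsRadialOn p δ F Fx Fy U) {ζ η : ℂ} (hw : (ζ, η) ∈ U) {Fxx Fyx Fyy : ℝ}
    (hFxx : HasDerivAt (Fx · (normSq η)) Fxx (normSq ζ) ∨
      ζ = 0 ∧ ContinuousAt (Fx · (normSq η)) 0)
    (hFyx : HasDerivAt (Fy · (normSq η)) Fyx (normSq ζ))
    (hFyy : HasDerivAt (Fy (normSq ζ) ·) Fyy (normSq η)) :
    HQ p δ ζ η = radialBlocks (2 * Fx (normSq ζ) (normSq η)) (4 * Fxx) (4 * Fyx)
      (2 * Fy (normSq ζ) (normSq η)) (4 * Fyy) (reIm ζ) (reIm η) := by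
  rw [HQ, radialBlocks]
  congr 1 <;> ext i j
  · rw [h.H1_apply hw hFxx, Matrix.add_apply, Matrix.smul_apply, Matrix.smul_apply,
      vecMulVec_apply, smul_eq_mul, smul_eq_mul]
    ring
  · rw [h.H2_apply hw hFyx, Matrix.smul_apply, vecMulVec_apply, smul_eq_mul]
    ring
  · rw [transpose_apply, h.H2_apply hw hFyx, Matrix.smul_apply, vecMulVec_apply, smul_eq_mul]
    ring
  · rw [h.H3_apply hw hFyy, Matrix.add_apply, Matrix.smul_apply, Matrix.smul_apply,
      vecMulVec_apply, smul_eq_mul, smul_eq_mul]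
    ring

lemma quadForm_rotate_radialBlocks (φ a₁ b₁ m a₃ b₃ : ℝ) (z e ω₁ ω₂ : Fin 2 → ℝ) :
    ((1 / 2 : ℝ) • ((Umat φ)ᵀ * radialBlocks a₁ b₁ m a₃ b₃ z e
        + radialBlocks a₁ b₁ m a₃ b₃ z e * Umat φ)) *ᵥ Sum.elim ω₁ ω₂ ⬝ᵥ Sum.elim ω₁ ω₂ =
      rotatedRadialForm (cos φ) (sin φ) a₁ b₁ m a₃ b₃ z e ω₁ ω₂ := by
  simp only [radialBlocks, Umat, Omat, rotatedRadialForm, wedge, dotProduct, mulVec,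
    Fintype.sum_sum_type, Fin.sum_univ_two, Matrix.smul_apply, Matrix.add_apply, Matrix.mul_apply,
    transpose_apply, fromBlocks_apply₁₁, fromBlocks_apply₁₂, fromBlocks_apply₂₁,
    fromBlocks_apply₂₂, Sum.elim_inl, Sum.elim_inr, vecMulVec_apply, Matrix.one_apply,
    Matrix.zero_apply, smul_eq_mul, cos_neg, sin_neg, of_apply, cons_val', cons_val_zero,
    cons_val_one, cons_val_fin_one, Fin.isValue, one_ne_zero, zero_ne_one, ↓reduceIte]
  ring

end RadialBlocks

section Curve

lemma norm_rpow_eq_normSq_rpow (z : ℂ) (a : ℝ) : ‖z‖ ^ a = normSq z ^ (a / 2) := by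
  rw [Complex.norm_def, Real.sqrt_eq_rpow, ← Real.rpow_mul (Complex.normSq_nonneg z)]
  ring_nf

variable {p : ℝ}

lemma norm_rpow_qexp (hp : 2 < p) (η : ℂ) :
    ‖η‖ ^ qexp p = (normSq η ^ (qexp p - 1)) ^ (p / 2) := by
  rw [norm_rpow_eq_normSq_rpow, ← Real.rpow_mul (Complex.normSq_nonneg η)]
  congr 1
  unfold qexp; field_simp [(by linarith : p - 1 ≠ 0)]; ring

lemma norm_rpow_lt_norm_rpow_iff (hp : 2 < p) (ζ η : ℂ) :
    ‖ζ‖ ^ p < ‖η‖ ^ qexp p ↔ normSq ζ < normSq η ^ (qexp p - 1) := by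
  rw [norm_rpow_eq_normSq_rpow, norm_rpow_qexp hp, Real.rpow_lt_rpow_iff
    (Complex.normSq_nonneg ζ) (Real.rpow_nonneg (Complex.normSq_nonneg η) _) (by linarith)]

lemma norm_rpow_qexp_lt_norm_rpow_iff (hp : 2 < p) (ζ η : ℂ) :
    ‖η‖ ^ qexp p < ‖ζ‖ ^ p ↔ normSq η ^ (qexp p - 1) < normSq ζ := by
  rw [norm_rpow_eq_normSq_rpow ζ, norm_rpow_qexp hp, Real.rpow_lt_rpow_iff
    (Real.rpow_nonneg (Complex.normSq_nonneg η) _) (Complex.normSq_nonneg ζ) (by linarith)]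

/-- The part of `{η ≠ 0}` where `Q` is given by its first formula. -/
def belowCurve (p : ℝ) : Set (ℂ × ℂ) := {w | normSq w.1 < normSq w.2 ^ (qexp p - 1)}

/-- The part of `{η ≠ 0}` where `Q` is given by its second formula. -/
def aboveCurve (p : ℝ) : Set (ℂ × ℂ) := {w | normSq w.2 ^ (qexp p - 1) < normSq w.1 ∧ w.2 ≠ 0}

lemma one_lt_qexp (hp : 2 < p) : 1 < qexp p := by
  unfold qexp; rw [lt_div_iff₀ (by linarith)]; linarith

lemma isOpen_belowCurve (hp : 2 < p) : IsOpen (belowCurve p) :=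
  isOpen_lt (by fun_prop) (by
    have := one_lt_qexp hp
    exact (Complex.continuous_normSq.comp continuous_snd).rpow_const
      fun _ => Or.inr (by linarith))

lemma isOpen_aboveCurve (hp : 2 < p) : IsOpen (aboveCurve p) := by
  have := one_lt_qexp hp
  refine (isOpen_lt ((Complex.continuous_normSq.comp continuous_snd).rpow_const
    fun _ => Or.inr (by linarith)) (by fun_prop)).inter ?_
  exact isOpen_ne_fun continuous_snd continuous_const

lemma snd_ne_zero_of_mem_belowCurve (hp : 2 < p) {w : ℂ × ℂ} (hw : w ∈ belowCurve p) :
    w.2 ≠ 0 := by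
  rintro h
  have hw : normSq w.1 < normSq w.2 ^ (qexp p - 1) := hw
  rw [h, Complex.normSq_zero, Real.zero_rpow (by linarith [one_lt_qexp hp])] at hw
  exact (Complex.normSq_nonneg _).not_gt hw

lemma one_le_rpow_mul_rpow_of_rpow_lt {p x y : ℝ} (hp : 2 < p) (hy : 0 < y)
    (hxy : y ^ (qexp p - 1) < x) : 1 ≤ x ^ (p / 2 - 1) * y ^ (qexp p / 2 - 1) := by
  have hexp : (qexp p - 1) * (p / 2 - 1) = -(qexp p / 2 - 1) := by
    unfold qexp; field_simp [(by linarith : p - 1 ≠ 0)]; ring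
  have hle : y ^ (-(qexp p / 2 - 1)) ≤ x ^ (p / 2 - 1) := by
    rw [← hexp, Real.rpow_mul hy.le]
    exact Real.rpow_le_rpow (by positivity) hxy.le (by linarith)
  calc (1 : ℝ) = y ^ (-(qexp p / 2 - 1)) * y ^ (qexp p / 2 - 1) := by
        rw [← Real.rpow_add hy, neg_add_cancel, Real.rpow_zero]
    _ ≤ x ^ (p / 2 - 1) * y ^ (qexp p / 2 - 1) := by gcongr

lemma rpow_sq_mul_mul_le_one {q x y : ℝ} (hy : 0 < y) (hxy : x ≤ y ^ (q - 1)) :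
    (y ^ ((2 - q) / 2 - 1)) ^ 2 * x * y ≤ 1 := by
  have h1 : (y ^ ((2 - q) / 2 - 1)) ^ 2 * y * y ^ (q - 1) = 1 := by
    rw [← Real.rpow_natCast, ← Real.rpow_mul hy.le, ← Real.rpow_add_one hy.ne',
      ← Real.rpow_add hy]
    norm_num [show ((2 - q) / 2 - 1) * 2 + 1 + (q - 1) = 0 by ring]
  nlinarith [mul_le_mul_of_nonneg_left hxy (by positivity : 0 ≤ (y ^ ((2 - q) / 2 - 1)) ^ 2 * y)]

end Curve

section QOnRegions

variable {p : ℝ}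

lemma isRadialOn_belowCurve (hp : 2 < p) (δ : ℝ) :
    IsRadialOn p δ
      (fun x y => x ^ (p / 2) + y ^ (qexp p / 2) + δ * (x * y ^ ((2 - qexp p) / 2)))
      (fun x y => p / 2 * x ^ (p / 2 - 1) + δ * y ^ ((2 - qexp p) / 2))
      (fun x y => qexp p / 2 * y ^ (qexp p / 2 - 1)
        + δ * (x * ((2 - qexp p) / 2 * y ^ ((2 - qexp p) / 2 - 1))))
      (belowCurve p) where
  isOpen := isOpen_belowCurve hp
  eq w hw := by
    rw [Q, if_pos ((norm_rpow_lt_norm_rpow_iff hp _ _).2 hw).le]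
    simp only [norm_rpow_eq_normSq_rpow]
    norm_num
  hasDerivAt_fst w _ := by
    have h := ((Real.hasDerivAt_rpow_const (x := normSq w.1)
      (Or.inr (by linarith : 1 ≤ p / 2))).add_const (normSq w.2 ^ (qexp p / 2))).add
        (((hasDerivAt_id _).mul_const (normSq w.2 ^ ((2 - qexp p) / 2))).const_mul δ)
    exact h.congr_deriv (by simp)
  hasDerivAt_snd w hw := by
    have hη : normSq w.2 ≠ 0 := by
      simpa using snd_ne_zero_of_mem_belowCurve hp hw
    have h := ((Real.hasDerivAt_rpow_const (p := qexp p / 2) (Or.inl hη)).const_add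
      (normSq w.1 ^ (p / 2))).add
        (((Real.hasDerivAt_rpow_const (p := (2 - qexp p) / 2) (Or.inl hη)).const_mul
          (normSq w.1)).const_mul δ)
    exact h.congr_deriv (by ring)

lemma isRadialOn_aboveCurve (hp : 2 < p) (δ : ℝ) :
    IsRadialOn p δ
      (fun x y => (1 + 2 * δ / p) * x ^ (p / 2) + (1 + δ * (2 / qexp p - 1)) * y ^ (qexp p / 2))
      (fun x _ => (1 + 2 * δ / p) * (p / 2 * x ^ (p / 2 - 1)))
      (fun _ y => (1 + δ * (2 / qexp p - 1)) * (qexp p / 2 * y ^ (qexp p / 2 - 1)))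
      (aboveCurve p) where
  isOpen := isOpen_aboveCurve hp
  eq w hw := by
    rw [Q, if_neg (not_le.2 ((norm_rpow_qexp_lt_norm_rpow_iff hp _ _).2 hw.1))]
    simp only [norm_rpow_eq_normSq_rpow]
    ring
  hasDerivAt_fst w _ :=
    ((Real.hasDerivAt_rpow_const (Or.inr (by linarith : 1 ≤ p / 2))).const_mul _).add_const _
  hasDerivAt_snd w hw :=
    ((Real.hasDerivAt_rpow_const (Or.inl (by simpa using hw.2))).const_mul _).const_add _

end QOnRegions

section QuadraticForm

variable {p ε δ φ : ℝ} {ζ η : ℂ}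

lemma quadForm_RQ_ge_of_gt (h : Admissible p (qexp p) ε δ (cos φ) (sin φ)) (hη : η ≠ 0)
    (hgt : ‖η‖ ^ qexp p < ‖ζ‖ ^ p) (ω₁ ω₂ : Fin 2 → ℝ) :
    2 * δ * cos φ * √(ω₁ ⬝ᵥ ω₁) * √(ω₂ ⬝ᵥ ω₂) ≤
      (RQ p δ φ ζ η *ᵥ Sum.elim ω₁ ω₂) ⬝ᵥ Sum.elim ω₁ ω₂ := by
  have hp := h.two_lt
  have hw : (ζ, η) ∈ aboveCurve p := ⟨(norm_rpow_qexp_lt_norm_rpow_iff hp ζ η).1 hgt, hη⟩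
  have hy : 0 < normSq η := Complex.normSq_pos.2 hη
  have hx : 0 < normSq ζ := (Real.rpow_nonneg hy.le _).trans_lt hw.1
  rw [RQ, (isRadialOn_aboveCurve hp δ).HQ_eq hw
    (Or.inl (((Real.hasDerivAt_rpow_const (Or.inl hx.ne')).const_mul (p / 2)).const_mul _))
    (hasDerivAt_const _ _)
    (((Real.hasDerivAt_rpow_const (Or.inl hy.ne')).const_mul (qexp p / 2)).const_mul _),
    quadForm_rotate_radialBlocks]
  refine (rotatedRadialForm_ge_of_one_le_mul h (reIm_dotProduct_self ζ) (reIm_dotProduct_self η)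
    hx hy (Real.rpow_pos_of_pos hx (p / 2 - 1)) (Real.rpow_pos_of_pos hy (qexp p / 2 - 1))
    (one_le_rpow_mul_rpow_of_rpow_lt hp hy hw.1)).trans_eq ?_
  rw [Real.rpow_sub_one hx.ne' (p / 2 - 1), Real.rpow_sub_one hy.ne' (qexp p / 2 - 1)]
  unfold rotatedRadialForm
  ring

lemma quadForm_RQ_ge_of_lt (h : Admissible p (qexp p) ε δ (cos φ) (sin φ))
    (hlt : ‖ζ‖ ^ p < ‖η‖ ^ qexp p) (ω₁ ω₂ : Fin 2 → ℝ) :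
    2 * δ * cos φ * √(ω₁ ⬝ᵥ ω₁) * √(ω₂ ⬝ᵥ ω₂) ≤
      (RQ p δ φ ζ η *ᵥ Sum.elim ω₁ ω₂) ⬝ᵥ Sum.elim ω₁ ω₂ := by
  have hp := h.two_lt
  have hw : (ζ, η) ∈ belowCurve p := (norm_rpow_lt_norm_rpow_iff hp ζ η).1 hlt
  have hy : 0 < normSq η := Complex.normSq_pos.2 (snd_ne_zero_of_mem_belowCurve hp hw)
  have hx := Complex.normSq_nonneg ζ
  have hFxx : HasDerivAt (fun x => p / 2 * x ^ (p / 2 - 1) + δ * normSq η ^ ((2 - qexp p) / 2))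
        (p / 2 * ((p / 2 - 1) * normSq ζ ^ (p / 2 - 1 - 1))) (normSq ζ) ∨
      ζ = 0 ∧ ContinuousAt
        (fun x => p / 2 * x ^ (p / 2 - 1) + δ * normSq η ^ ((2 - qexp p) / 2)) 0 := by
    rcases eq_or_ne ζ 0 with rfl | hζ
    · exact Or.inr ⟨rfl, ((Real.continuousAt_rpow_const 0 _ (Or.inr (by linarith))).const_mul
        _).add continuousAt_const⟩
    · exact Or.inl (((Real.hasDerivAt_rpow_const
        (Or.inl (Complex.normSq_pos.2 hζ).ne')).const_mul _).add_const _)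
  rw [RQ, (isRadialOn_belowCurve hp δ).HQ_eq hw hFxx
    ((((hasDerivAt_id _).mul_const _).const_mul δ).const_add _)
    (((Real.hasDerivAt_rpow_const (Or.inl hy.ne')).const_mul _).add
      (((Real.hasDerivAt_rpow_const (Or.inl hy.ne')).const_mul _).const_mul _ |>.const_mul δ)),
    quadForm_rotate_radialBlocks]
  have hu : 0 < normSq η ^ ((2 - qexp p) / 2 - 1) := Real.rpow_pos_of_pos hy _
  have huy : normSq η ^ ((2 - qexp p) / 2 - 1) * normSq η = normSq η ^ ((2 - qexp p) / 2) := by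
    rw [Real.rpow_sub_one hy.ne', div_mul_cancel₀ _ hy.ne']
  have hR' : normSq ζ ^ (p / 2 - 1 - 1) * normSq ζ = normSq ζ ^ (p / 2 - 1) := by
    rcases hx.eq_or_lt with hx0 | hx0
    · rw [← hx0, mul_zero, Real.zero_rpow (by linarith)]
    · rw [Real.rpow_sub_one hx0.ne', div_mul_cancel₀ _ hx0.ne']
  have huyT : normSq η ^ ((2 - qexp p) / 2 - 1) * normSq η * normSq η ^ (qexp p / 2 - 1) = 1 := by
    rw [huy, ← Real.rpow_add hy, show (2 - qexp p) / 2 + (qexp p / 2 - 1) = 0 by ring,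
      Real.rpow_zero]
  refine (rotatedRadialForm_ge_of_mul_le_one h (reIm_dotProduct_self ζ) (reIm_dotProduct_self η)
    hy (Real.rpow_nonneg hx _) hR' hu huyT (rpow_sq_mul_mul_le_one hy hw.le)).trans_eq ?_
  rw [huy, Real.rpow_sub_one hy.ne' ((2 - qexp p) / 2 - 1),
    Real.rpow_sub_one hy.ne' (qexp p / 2 - 1)]
  unfold rotatedRadialForm
  ring

end QuadraticForm

end NazarovTreil

theorem stmt14 (p ε δ φ : ℝ) (hp : 2 < p) (hε : ε ∈ Set.Ioo (0 : ℝ) (1 / 2))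
    (hδ : δ = 2 * qexp p * (qexp p - 1) * ε / 85)
    (hφ : |φ| ≤ Real.arccos (1 - 2 / ((p - 2 * ε) / (1 - ε))))
    (ζ η : ℂ) (hη : η ≠ 0) (hne : ‖ζ‖ ^ p ≠ ‖η‖ ^ qexp p)
    (ω₁ ω₂ : Fin 2 → ℝ) :
    2 * δ * Real.cos φ * Real.sqrt (ω₁ ⬝ᵥ ω₁) * Real.sqrt (ω₂ ⬝ᵥ ω₂) ≤
      ((RQ p δ φ ζ η).mulVec (Sum.elim ω₁ ω₂)) ⬝ᵥ (Sum.elim ω₁ ω₂) := by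
  obtain ⟨hε₀, hε₁⟩ := hε
  have hpε : 0 < p - 2 * ε := by linarith
  have harg : 1 - 2 / ((p - 2 * ε) / (1 - ε)) = (p - 2) / (p - 2 * ε) := by
    field_simp [(by linarith : 1 - ε ≠ 0)]; ring
  have h : NazarovTreil.Admissible p (qexp p) ε δ (cos φ) (sin φ) :=
    { two_lt := hp, conj_eq := rfl, eps_pos := hε₀, eps_lt := hε₁, delta_eq := hδ
      cos_ge := NazarovTreil.le_cos_of_abs_le_arccos
        (by linarith [div_nonneg (by linarith : 0 ≤ p - 2) hpε.le])
        ((div_le_one hpε).2 (by linarith)) (harg ▸ hφ)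
      cos_le := cos_le_one φ
      sin_sq := sin_sq φ }
  rcases hne.lt_or_gt with hlt | hgt
  · exact NazarovTreil.quadForm_RQ_ge_of_lt h hlt ω₁ ω₂
  · exact NazarovTreil.quadForm_RQ_ge_of_gt h hη hgt ω₁ ω₂
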